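/- Let s > t > 0 be real numbers and let λ ∈ ℝ. Then ∫_0^∞ μ^{s−t−1} · ( max(−(λ+μ), 0) )^t dμ = ( Γ(s−t)·Γ(t+1)/Γ(s+1) ) · ( max(−λ, 0) )^s, where Γ denotes Euler's Gamma function. -/

import Mathlib

/-!
For `μ ≥ 0` one has `(λ + μ)_- = (λ_- - μ)_+`, so with `a = λ_-` the integrand is supported on
`[0, a]`, where it equals `μ^(s-t-1) (a - μ)^t`. This is the scaled Beta integral
`∫_0^a x^(u-1) (a-x)^(v-1) dx = B(u, v) a^(u+v-1)` with `u = s - t`, `v = t + 1`.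
-/

open MeasureTheory Set Real

theorem integral_rpow_mul_sub_rpow {u v a : ℝ} (hu : 0 < u) (hv : 0 < v) (ha : 0 < a) :
    ∫ x in (0 : ℝ)..a, x ^ (u - 1) * (a - x) ^ (v - 1)
      = ProbabilityTheory.beta u v * a ^ (u + v - 1) := by
  apply Complex.ofReal_injective
  have integral_ofReal :
      ((∫ x in (0 : ℝ)..a, x ^ (u - 1) * (a - x) ^ (v - 1) : ℝ) : ℂ)
        = ∫ x in (0 : ℝ)..a, (x : ℂ) ^ ((u : ℂ) - 1) * ((a : ℂ) - x) ^ ((v : ℂ) - 1) := by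
    rw [← intervalIntegral.integral_ofReal]
    refine intervalIntegral.integral_congr fun x hx => ?_
    rw [uIcc_of_le ha.le] at hx
    simp only [Complex.ofReal_mul, Complex.ofReal_cpow hx.1,
      Complex.ofReal_cpow (sub_nonneg.mpr hx.2), Complex.ofReal_sub, Complex.ofReal_one]
  have betaIntegral_ofReal : Complex.betaIntegral u v = ProbabilityTheory.beta u v := by
    rw [Complex.betaIntegral_eq_Gamma_mul_div _ _ (by simpa) (by simpa), ProbabilityTheory.beta,
      ← Complex.ofReal_add, Complex.Gamma_ofReal, Complex.Gamma_ofReal, Complex.Gamma_ofReal]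
    norm_cast
  rw [integral_ofReal, Complex.betaIntegral_scaled _ _ ha, betaIntegral_ofReal,
    Complex.ofReal_mul, Complex.ofReal_cpow ha.le, mul_comm]
  norm_cast

theorem max_neg_add_eq_max_sub {y μ : ℝ} (hμ : 0 ≤ μ) :
    max (-(y + μ)) 0 = max (max (-y) 0 - μ) 0 := by
  rcases le_total 0 y with hy | hy
  · rw [max_eq_right (neg_nonpos.mpr hy), max_eq_right (by linarith), max_eq_right (by linarith)]
  · rw [max_eq_left (neg_nonneg.mpr hy), neg_add, sub_eq_add_neg]

theorem setIntegral_Ioi_mul_max_sub_rpow (f : ℝ → ℝ) {a t : ℝ} (ha : 0 ≤ a) (ht : t ≠ 0) :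
    ∫ μ in Ioi 0, f μ * max (a - μ) 0 ^ t = ∫ μ in (0 : ℝ)..a, f μ * (a - μ) ^ t := by
  rw [intervalIntegral.integral_of_le ha,
    setIntegral_eq_of_subset_of_forall_sdiff_eq_zero measurableSet_Ioi Ioc_subset_Ioi_self]
  · refine setIntegral_congr_fun measurableSet_Ioc fun μ hμ => ?_
    rw [max_eq_left (sub_nonneg.mpr hμ.2)]
  · rintro μ ⟨hμ_pos, hμ⟩
    have : a < μ := not_le.mp (not_and.mp hμ hμ_pos)
    rw [max_eq_right (by linarith), zero_rpow ht, mul_zero]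

theorem aizenman_lieb_identity (s t : ℝ) (ht : 0 < t) (hts : t < s) (lam : ℝ) :
    ∫ μ in Set.Ioi (0 : ℝ), μ ^ (s - t - 1) * (max (-(lam + μ)) 0) ^ t
      = (Real.Gamma (s - t) * Real.Gamma (t + 1) / Real.Gamma (s + 1))
          * (max (-lam) 0) ^ s := by
  set a := max (-lam) 0
  have reduced : ∫ μ in Ioi (0 : ℝ), μ ^ (s - t - 1) * max (-(lam + μ)) 0 ^ t
      = ∫ μ in (0 : ℝ)..a, μ ^ (s - t - 1) * (a - μ) ^ t := by
    rw [← setIntegral_Ioi_mul_max_sub_rpow _ (le_max_right _ _) ht.ne']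
    exact setIntegral_congr_fun measurableSet_Ioi fun μ hμ => by
      rw [max_neg_add_eq_max_sub (le_of_lt hμ)]
  rw [reduced]
  rcases (show 0 ≤ a from le_max_right _ _).eq_or_lt with ha | ha
  · rw [← ha, intervalIntegral.integral_same, zero_rpow (by linarith), mul_zero]
  · have h := integral_rpow_mul_sub_rpow (v := t + 1) (sub_pos.mpr hts) (by linarith) ha
    rw [ProbabilityTheory.beta, show s - t + (t + 1) = s + 1 by ring] at h
    simpa only [add_sub_cancel_right] using h
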